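/- arXiv:2512.04332 — 8 statements merged into one kernel-verified Lean document; each statement's English description precedes it below -/
import Mathlib

section
/- Let (X, 𝒳) be a measurable space, ν a probability measure on X, r : X → ℝ a bounded measurable reward, β > 0, Z := β·log ∫ exp(r(x)/β) dν(x), w(x) := exp((r(x) − Z)/β), and μ* := ν.withDensity w. Then for every probability measure μ on X with ν ≪ μ, ∫ −exp(−(r(x) − Z)/β) dμ(x) − D(ν‖μ) ≤ ∫ −exp(−(r(x) − Z)/β) dμ*(x) − D(ν‖μ*); i.e., the reward-tilted measure μ*, which satisfies dμ*/dν = exp((r − Z)/β), is a global maximizer of the DDRL objective J(μ) := ∫ −exp(−(r − Z)/β) dμ − D(ν‖μ). -/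
open MeasureTheory Real
open scoped Classical
open scoped ENNReal NNReal

/-- Kullback–Leibler divergence `D(ν‖μ)`: `∫ log(dν/dμ) dν` if `ν ≪ μ` and the
log-density is `ν`-integrable, and `+∞` otherwise. -/
noncomputable def klDiv {X : Type*} [MeasurableSpace X] (ν μ : Measure X) : EReal :=
  if ν ≪ μ ∧ Integrable (fun x => Real.log (ν.rnDeriv μ x).toReal) ν
  then ((∫ x, Real.log (ν.rnDeriv μ x).toReal ∂ν : ℝ) : EReal)
  else ⊤

/-- The reward-tilted measure `μ* = ν.withDensity (exp((r − Z)/β))` is a global maximizer of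
the DDRL objective `J(μ) = ∫ −exp(−(r − Z)/β) dμ − D(ν‖μ)`. -/
theorem ddrl_optimal_policy {X : Type*} [MeasurableSpace X]
    (ν : Measure X) [IsProbabilityMeasure ν]
    (r : X → ℝ) (hr : Measurable r) (C : ℝ) (hrBd : ∀ x, |r x| ≤ C)
    (β : ℝ) (hβ : 0 < β)
    (Z : ℝ) (hZ : Z = β * Real.log (∫ x, Real.exp (r x / β) ∂ν))
    (w : X → ℝ) (hw : w = fun x => Real.exp ((r x - Z) / β))
    (μStar : Measure X) (hμStar : μStar = ν.withDensity (fun x => ENNReal.ofReal (w x)))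
    (μ : Measure X) [IsProbabilityMeasure μ] (hνμ : ν ≪ μ) :
    ((∫ x, -Real.exp (-((r x - Z) / β)) ∂μ : ℝ) : EReal) - klDiv ν μ
      ≤ ((∫ x, -Real.exp (-((r x - Z) / β)) ∂μStar : ℝ) : EReal) - klDiv ν μStar := by

  subst hw hμStar
  set f : X → ℝ := fun x => (r x - Z) / β with hf
  have hf_meas : Measurable f := (hr.sub measurable_const).div_const β
  set M : ℝ := (C + |Z|) / β with hM
  have hfbd : ∀ x, |f x| ≤ M := by
    intro x
    have h1 : |r x - Z| ≤ C + |Z| := (abs_sub _ _).trans (by linarith [hrBd x])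
    have : |f x| = |r x - Z| / β := by
      rw [hf, abs_div, abs_of_pos hβ]
    rw [this, hM]
    gcongr
  -- basic facts about μStar
  have hw_meas : Measurable fun x => ENNReal.ofReal (Real.exp (f x)) :=
    (hf_meas.exp).ennreal_ofReal
  have hwin_meas : Measurable fun x => ENNReal.ofReal (Real.exp (-f x)) :=
    (hf_meas.neg.exp).ennreal_ofReal
  set μS : Measure X := ν.withDensity (fun x => ENNReal.ofReal (Real.exp (f x))) with hμS
  have hν_eq : μS.withDensity (fun x => ENNReal.ofReal (Real.exp (-f x))) = ν := by
    rw [hμS, ← withDensity_mul _ hw_meas hwin_meas]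
    have : ((fun x => ENNReal.ofReal (Real.exp (f x))) * fun x => ENNReal.ofReal (Real.exp (-f x)))
        = fun _ => (1 : ℝ≥0∞) := by
      funext x
      simp only [Pi.mul_apply]
      rw [← ENNReal.ofReal_mul (Real.exp_nonneg _), ← Real.exp_add, add_neg_cancel,
        Real.exp_zero, ENNReal.ofReal_one]
    rw [this]
    simpa using withDensity_one (μ := ν)
  have hac : ν ≪ μS := hν_eq ▸ withDensity_absolutelyContinuous μS _
  have hfin : IsFiniteMeasure μS := by
    refine isFiniteMeasure_withDensity ?_
    have hle : (∫⁻ x, ENNReal.ofReal (Real.exp (f x)) ∂ν)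
        ≤ ∫⁻ _, ENNReal.ofReal (Real.exp M) ∂ν :=
      lintegral_mono fun x =>
        ENNReal.ofReal_le_ofReal (Real.exp_le_exp.2 ((le_abs_self _).trans (hfbd x)))
    exact (hle.trans_lt (by simp [lintegral_const])).ne
  have hrn : ν.rnDeriv μS =ᵐ[ν] fun x => ENNReal.ofReal (Real.exp (-f x)) := by
    have h := Measure.rnDeriv_withDensity μS hwin_meas
    rw [hν_eq] at h
    exact hac.ae_le h
  have hlog_eq : (fun x => Real.log (ν.rnDeriv μS x).toReal) =ᵐ[ν] fun x => -f x := by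
    filter_upwards [hrn] with x hx
    rw [hx, ENNReal.toReal_ofReal (Real.exp_nonneg _), Real.log_exp]
  have hInt_negf : Integrable (fun x => -f x) ν := by
    refine Integrable.mono' (integrable_const M) hf_meas.neg.aestronglyMeasurable
      (ae_of_all _ fun x => ?_)
    rw [Real.norm_eq_abs, abs_neg]; exact hfbd x
  have hInt_log : Integrable (fun x => Real.log (ν.rnDeriv μS x).toReal) ν :=
    hInt_negf.congr hlog_eq.symm
  have hkl_star : klDiv ν μS = ((∫ x, -f x ∂ν : ℝ) : EReal) := by
    rw [klDiv, if_pos ⟨hac, hInt_log⟩, integral_congr_ae hlog_eq]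
  -- compute ∫ -exp(-f) dμS = -1
  have hIstar : (∫ x, -Real.exp (-f x) ∂μS : ℝ) = -1 := by
    have : μS = ν.withDensity (fun x => ((Real.exp (f x)).toNNReal : ℝ≥0∞)) := rfl
    rw [this, integral_withDensity_eq_integral_smul (hf_meas.exp.real_toNNReal)]
    have : (fun x => (Real.exp (f x)).toNNReal • (-Real.exp (-f x))) = fun _ => (-1 : ℝ) := by
      funext x
      rw [NNReal.smul_def, smul_eq_mul, Real.coe_toNNReal _ (Real.exp_nonneg _),
        mul_neg, ← Real.exp_add, add_neg_cancel, Real.exp_zero]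
    rw [this]
    simp
  -- main case split
  by_cases hcond : ν ≪ μ ∧ Integrable (fun x => Real.log (ν.rnDeriv μ x).toReal) ν
  · -- finite KL case
    have hρ'_meas : Measurable (ν.rnDeriv μ) := Measure.measurable_rnDeriv ν μ
    set h : X → ℝ := fun x => 1 - f x - Real.log (ν.rnDeriv μ x).toReal with hh
    have hInt_f : Integrable f ν := by
      refine Integrable.mono' (integrable_const M) hf_meas.aestronglyMeasurable
        (ae_of_all _ fun x => ?_)
      rw [Real.norm_eq_abs]; exact hfbd x
    have hInt_1f : Integrable (fun x => 1 - f x) ν := by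
      exact (integrable_const (1 : ℝ)).sub hInt_f
    have hInt_h : Integrable h ν := by
      exact hInt_1f.sub hcond.2
    have hh_meas : Measurable h :=
      ((measurable_const.sub hf_meas).sub (hρ'_meas.ennreal_toReal.log))
    -- key inequality ∫ h dν ≤ ∫ exp(-f) dμ
    have hIexp_eq : (∫ x, Real.exp (-f x) ∂μ : ℝ)
        = (∫⁻ x, ENNReal.ofReal (Real.exp (-f x)) ∂μ).toReal := by
      rw [integral_eq_lintegral_of_nonneg_ae (f := fun x => Real.exp (-f x))
        (ae_of_all _ fun x => Real.exp_nonneg _)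
        hf_meas.neg.exp.aestronglyMeasurable]
    have hfin_exp : (∫⁻ x, ENNReal.ofReal (Real.exp (-f x)) ∂μ) < ⊤ := by
      have hle : (∫⁻ x, ENNReal.ofReal (Real.exp (-f x)) ∂μ)
          ≤ ∫⁻ _, ENNReal.ofReal (Real.exp M) ∂μ :=
        lintegral_mono fun x =>
          ENNReal.ofReal_le_ofReal (Real.exp_le_exp.2 ((neg_le_abs _).trans (hfbd x)))
      exact hle.trans_lt (by simp [lintegral_const])
    have key : ∫ x, h x ∂ν ≤ ∫ x, Real.exp (-f x) ∂μ := by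
      have step1 : ∫ x, h x ∂ν ≤ ∫ x, max (h x) 0 ∂ν :=
        integral_mono hInt_h (hInt_h.pos_part) fun x => le_max_left _ _
      have step2 : ∫ x, max (h x) 0 ∂ν = (∫⁻ x, ENNReal.ofReal (h x) ∂ν).toReal := by
        rw [integral_eq_lintegral_of_nonneg_ae (μ := ν) (f := fun x => max (h x) 0)
          (ae_of_all _ fun x => le_max_right _ _)
          (hh_meas.max measurable_const).aestronglyMeasurable]
        congr 1
        refine lintegral_congr fun x => ?_
        rcases le_total (h x) 0 with hx | hx
        · rw [max_eq_right hx, ENNReal.ofReal_zero, ENNReal.ofReal_eq_zero.2 hx]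
        · rw [max_eq_left hx]
      have step3 : (∫⁻ x, ENNReal.ofReal (h x) ∂ν)
          ≤ ∫⁻ x, ENNReal.ofReal (Real.exp (-f x)) / ν.rnDeriv μ x ∂ν := by
        refine lintegral_mono_ae ?_
        filter_upwards [Measure.rnDeriv_pos hcond.1,
          hcond.1.ae_le (Measure.rnDeriv_lt_top ν μ)] with x hpos htop
        have hρtR : 0 < (ν.rnDeriv μ x).toReal := ENNReal.toReal_pos hpos.ne' htop.ne
        rw [← ENNReal.ofReal_toReal htop.ne, ← ENNReal.ofReal_div_of_pos hρtR]
        refine ENNReal.ofReal_le_ofReal ?_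
        have hexp := Real.add_one_le_exp (-f x - Real.log (ν.rnDeriv μ x).toReal)
        rw [Real.exp_sub, Real.exp_log hρtR] at hexp
        rw [hh]
        linarith
      have step4 : (∫⁻ x, ENNReal.ofReal (Real.exp (-f x)) / ν.rnDeriv μ x ∂ν)
          ≤ ∫⁻ x, ENNReal.ofReal (Real.exp (-f x)) ∂μ := by
        have heq := lintegral_withDensity_eq_lintegral_mul μ hρ'_meas
          (hwin_meas.div hρ'_meas)
        rw [Measure.withDensity_rnDeriv_eq ν μ hcond.1] at heq
        simp only [Pi.div_apply] at heq
        rw [heq]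
        refine lintegral_mono fun x => ?_
        simp only [Pi.mul_apply]
        exact ENNReal.mul_div_le
      calc ∫ x, h x ∂ν ≤ (∫⁻ x, ENNReal.ofReal (h x) ∂ν).toReal := step2 ▸ step1
        _ ≤ (∫⁻ x, ENNReal.ofReal (Real.exp (-f x)) ∂μ).toReal :=
            ENNReal.toReal_mono hfin_exp.ne (step3.trans step4)
        _ = ∫ x, Real.exp (-f x) ∂μ := hIexp_eq.symm
    -- now conclude
    have hkl : klDiv ν μ = ((∫ x, Real.log (ν.rnDeriv μ x).toReal ∂ν : ℝ) : EReal) := by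
      rw [klDiv, if_pos hcond]
    rw [hkl, hkl_star, hIstar, ← EReal.coe_sub, ← EReal.coe_sub, EReal.coe_le_coe_iff]
    have hIh : ∫ x, h x ∂ν = 1 - (∫ x, f x ∂ν) - ∫ x, Real.log (ν.rnDeriv μ x).toReal ∂ν := by
      rw [hh]
      rw [integral_sub hInt_1f hcond.2, integral_sub (integrable_const (1 : ℝ)) hInt_f]
      simp [measure_univ]
    have hIμ : ∫ x, -Real.exp (-f x) ∂μ = -∫ x, Real.exp (-f x) ∂μ := by
      rw [integral_neg]
    have hIν : ∫ x, -f x ∂ν = -∫ x, f x ∂ν := integral_neg _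
    rw [hIμ, hIν]
    rw [hIh] at key
    linarith
  · -- infinite KL case
    have : klDiv ν μ = ⊤ := by rw [klDiv, if_neg hcond]
    rw [this, hkl_star, hIstar]
    rw [EReal.sub_top]
    exact bot_le
end

section
/- Let (X, 𝒳, m) be a σ-finite measure space, q : X → ℝ a measurable function with q(x) > 0 for m-a.e. x, and w : X → ℝ measurable with w(x) > 0 for m-a.e. x. Suppose p : X → ℝ is measurable with p(x) > 0 m-a.e., and all four functions q·log p, p/w, q·log(q·w), q are m-integrable. Then ∫ (q(x)·log p(x) − p(x)/w(x)) dm(x) ≤ ∫ (q(x)·log(q(x)·w(x)) − q(x)) dm(x); i.e., the unconstrained maximizer of the functional p ↦ ∫ p·λ̃ dm + ∫ q·log p dm with λ̃ = −1/w over all positive measurable p is p = q·w. -/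
open MeasureTheory Real

/-- Integral form of the stationarity step: for a.e.-positive densities `q`, tilts `w`, and any
a.e.-positive candidate `p`, `∫ (q·log p − p/w) dm ≤ ∫ (q·log(q·w) − q) dm`; i.e., the
unconstrained maximizer of `p ↦ ∫ p·(−1/w) dm + ∫ q·log p dm` over positive `p` is `p = q·w`. -/
theorem integral_lagrangian_max {X : Type*} [MeasurableSpace X]
    (m : Measure X) [SigmaFinite m]
    (q w p : X → ℝ) (hq : Measurable q) (hw : Measurable w) (hp : Measurable p)
    (hqPos : ∀ᵐ x ∂m, 0 < q x) (hwPos : ∀ᵐ x ∂m, 0 < w x) (hpPos : ∀ᵐ x ∂m, 0 < p x)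
    (h1 : Integrable (fun x => q x * Real.log (p x)) m)
    (h2 : Integrable (fun x => p x / w x) m)
    (h3 : Integrable (fun x => q x * Real.log (q x * w x)) m)
    (h4 : Integrable q m) :
    ∫ x, (q x * Real.log (p x) - p x / w x) ∂m
      ≤ ∫ x, (q x * Real.log (q x * w x) - q x) ∂m := by
  apply integral_mono_ae (h1.sub h2) (h3.sub h4)
  filter_upwards [hqPos, hwPos, hpPos] with x hqx hwx hpx
  have hqw : 0 < q x * w x := mul_pos hqx hwx
  set t : ℝ := p x / (q x * w x) with ht
  have htpos : 0 < t := div_pos hpx hqw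
  have hlog : Real.log t ≤ t - 1 := Real.log_le_sub_one_of_pos htpos
  have hlogt : Real.log (p x) - Real.log (q x * w x) = Real.log t := by
    rw [ht, Real.log_div hpx.ne' hqw.ne']
  have hqt : q x * t = p x / w x := by
    field_simp [ht]
    rw [ht]; field_simp
  simp only [Pi.sub_apply]
  nlinarith [mul_le_mul_of_nonneg_left hlog hqx.le]
end

section
/- Let (X, 𝒳) be a measurable space, ν a probability measure on X, r : X → ℝ a bounded measurable reward, β > 0, Z := β·log ∫ exp(r(x)/β) dν(x), w(x) := exp((r(x) − Z)/β), μ* := ν.withDensity w, and J(μ) := ∫ −exp(−(r(x) − Z)/β) dμ(x) − D(ν‖μ). If μ is a probability measure on X with ν ≪ μ and μ ≪ ν such that J(μ) = J(μ*), then μ = μ*; i.e., the reward-tilted measure μ* is the unique global maximizer of the DDRL objective among probability measures equivalent to ν. -/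
open MeasureTheory Real
open scoped Classical

/-- Uniqueness: if a probability measure `μ` equivalent to `ν` attains the same DDRL objective
value as the reward-tilted measure `μ*`, then `μ = μ*`. -/
theorem ddrl_unique_maximizer {X : Type*} [MeasurableSpace X]
    (ν : Measure X) [IsProbabilityMeasure ν]
    (r : X → ℝ) (hr : Measurable r) (C : ℝ) (hrBd : ∀ x, |r x| ≤ C)
    (β : ℝ) (hβ : 0 < β)
    (Z : ℝ) (hZ : Z = β * Real.log (∫ x, Real.exp (r x / β) ∂ν))
    (w : X → ℝ) (hw : w = fun x => Real.exp ((r x - Z) / β))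
    (μStar : Measure X) (hμStar : μStar = ν.withDensity (fun x => ENNReal.ofReal (w x)))
    (μ : Measure X) [IsProbabilityMeasure μ] (hνμ : ν ≪ μ) (hμν : μ ≪ ν)
    (hJ : ((∫ x, -Real.exp (-((r x - Z) / β)) ∂μ : ℝ) : EReal) - klDiv ν μ
        = ((∫ x, -Real.exp (-((r x - Z) / β)) ∂μStar : ℝ) : EReal) - klDiv ν μStar) :
    μ = μStar := by
  have hw_pos : ∀ x, 0 < w x := by intro x; rw [hw]; exact Real.exp_pos _
  have hw_meas : Measurable w := by
    rw [hw]; exact ((hr.sub measurable_const).div_const β).exp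
  -- bounds on w and w⁻¹
  have hbd : ∀ x, |(r x - Z) / β| ≤ (C + |Z|) / β := by
    intro x
    rw [abs_div, abs_of_pos hβ]
    apply div_le_div_of_nonneg_right ?_ hβ.le |>.trans_eq rfl
    exact (abs_sub _ _).trans (add_le_add (hrBd x) le_rfl)
  set c : ℝ := Real.exp ((C + |Z|) / β) with hc
  have hw_le : ∀ x, w x ≤ c := by
    intro x; rw [hw, hc]
    exact Real.exp_le_exp.mpr ((le_abs_self _).trans (hbd x))
  have hw_inv_le : ∀ x, (w x)⁻¹ ≤ c := by
    intro x
    rw [hw, ← Real.exp_neg, hc]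
    exact Real.exp_le_exp.mpr ((neg_le_abs _).trans (hbd x))
  -- the normalizing constant
  set E := ∫ x, Real.exp (r x / β) ∂ν with hE
  have hint_exp : Integrable (fun x => Real.exp (r x / β)) ν := by
    refine Integrable.mono' (integrable_const (Real.exp (C / β)))
      ((hr.div_const β).exp.aestronglyMeasurable) (ae_of_all _ fun x => ?_)
    rw [Real.norm_eq_abs, abs_of_pos (Real.exp_pos _)]
    refine Real.exp_le_exp.mpr (div_le_div_of_nonneg_right ?_ hβ.le |>.trans_eq rfl)
    exact (le_abs_self _).trans (hrBd x)
  have hE_pos : 0 < E := by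
    have h1 : Real.exp (-C / β) ≤ E := by
      have := integral_mono (μ := ν) (integrable_const (Real.exp (-C / β))) hint_exp
        (fun x => Real.exp_le_exp.mpr (div_le_div_of_nonneg_right
          ((neg_le_neg (hrBd x)).trans (neg_abs_le _)) hβ.le))
      simpa using this
    exact lt_of_lt_of_le (Real.exp_pos _) h1
  have hZE : Real.exp (Z / β) = E := by
    rw [hZ, mul_div_cancel_left₀ _ hβ.ne', Real.exp_log hE_pos]
  have hw_eq : ∀ x, w x = Real.exp (r x / β) / E := by
    intro x; simp only [hw]; rw [sub_div, Real.exp_sub, hZE]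
  have hint_w : Integrable w ν := by
    have : w = fun x => Real.exp (r x / β) / E := funext hw_eq
    rw [this]; exact hint_exp.div_const E
  have hI_w : ∫ x, w x ∂ν = 1 := by
    have : w = fun x => Real.exp (r x / β) / E := funext hw_eq
    rw [this, integral_div, ← hE, div_self hE_pos.ne']
  -- facts about μStar
  have hW_meas : Measurable fun x => ENNReal.ofReal (w x) := hw_meas.ennreal_ofReal
  have hACsν : μStar ≪ ν := hμStar ▸ withDensity_absolutelyContinuous ν _
  have hACνs : ν ≪ μStar := by
    rw [hμStar]
    exact withDensity_absolutelyContinuous' hW_meas.aemeasurable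
      (ae_of_all _ fun x => by simp [ENNReal.ofReal_eq_zero, not_le, hw_pos x])
  have hPs : IsProbabilityMeasure μStar := by
    constructor
    rw [hμStar, withDensity_apply _ MeasurableSet.univ, Measure.restrict_univ,
      ← ofReal_integral_eq_lintegral_ofReal hint_w (ae_of_all _ fun x => (hw_pos x).le), hI_w,
      ENNReal.ofReal_one]
  have h_rnd_sν : μStar.rnDeriv ν =ᵐ[ν] fun x => ENNReal.ofReal (w x) := by
    rw [hμStar]; exact Measure.rnDeriv_withDensity ν hW_meas
  have h_exp_inv : ∀ x, -Real.exp (-((r x - Z) / β)) = -(w x)⁻¹ := by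
    intro x; simp only [hw]; rw [← Real.exp_neg]
  have h_rnd_νs : (fun x => Real.log (ν.rnDeriv μStar x).toReal)
      =ᵐ[ν] fun x => -((r x - Z) / β) := by
    have h1 : (μStar.rnDeriv ν)⁻¹ =ᵐ[ν] ν.rnDeriv μStar :=
      hACνs.ae_le (Measure.inv_rnDeriv hACsν)
    filter_upwards [h1, h_rnd_sν] with x hx1 hx2
    rw [← hx1, Pi.inv_apply, hx2, ENNReal.toReal_inv, ENNReal.toReal_ofReal (hw_pos x).le,
      Real.log_inv]
    simp only [hw, Real.log_exp]
  have h_int_rZ : Integrable (fun x => -((r x - Z) / β)) ν := by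
    refine Integrable.mono' (integrable_const ((C + |Z|) / β))
      (((hr.sub measurable_const).div_const β).neg.aestronglyMeasurable)
      (ae_of_all _ fun x => ?_)
    rw [Real.norm_eq_abs, abs_neg]
    exact hbd x
  have h_int_logνs : Integrable (fun x => Real.log (ν.rnDeriv μStar x).toReal) ν :=
    h_int_rZ.congr h_rnd_νs.symm
  have hkl_s : klDiv ν μStar = ((∫ x, -((r x - Z) / β) ∂ν : ℝ) : EReal) := by
    rw [klDiv, if_pos ⟨hACνs, h_int_logνs⟩, integral_congr_ae h_rnd_νs]
  have hI_star : ∫ x, -Real.exp (-((r x - Z) / β)) ∂μStar = -1 := by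
    rw [← integral_rnDeriv_smul hACsν]
    have h : (fun x => (μStar.rnDeriv ν x).toReal • (-Real.exp (-((r x - Z) / β))))
        =ᵐ[ν] fun _ => (-1 : ℝ) := by
      filter_upwards [h_rnd_sν] with x hx
      rw [hx, smul_eq_mul, ENNReal.toReal_ofReal (hw_pos x).le, h_exp_inv x, mul_neg,
        mul_inv_cancel₀ (hw_pos x).ne']
    rw [integral_congr_ae h]; simp
  -- facts about μ
  have hg_pos : ∀ᵐ x ∂ν, 0 < μ.rnDeriv ν x := hνμ.ae_le (Measure.rnDeriv_pos hμν)
  have hg_lt_top : ∀ᵐ x ∂ν, μ.rnDeriv ν x < ⊤ := Measure.rnDeriv_lt_top μ ν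
  have h_inv : (μ.rnDeriv ν)⁻¹ =ᵐ[ν] ν.rnDeriv μ := hνμ.ae_le (Measure.inv_rnDeriv hμν)
  have h_logf : (fun x => Real.log (ν.rnDeriv μ x).toReal)
      =ᵐ[ν] fun x => -Real.log (μ.rnDeriv ν x).toReal := by
    filter_upwards [h_inv] with x hx
    rw [← hx, Pi.inv_apply, ENNReal.toReal_inv, Real.log_inv]
  -- finiteness of klDiv ν μ
  by_cases hint : Integrable (fun x => Real.log (ν.rnDeriv μ x).toReal) ν
  swap
  · exfalso
    rw [klDiv, if_neg (fun h => hint h.2), EReal.sub_top, hkl_s, hI_star, ← EReal.coe_sub] at hJ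
    exact EReal.coe_ne_bot _ hJ.symm
  have hkl_μ : klDiv ν μ = ((∫ x, Real.log (ν.rnDeriv μ x).toReal ∂ν : ℝ) : EReal) := by
    rw [klDiv, if_pos ⟨hνμ, hint⟩]
  rw [hkl_μ, hkl_s, hI_star, ← EReal.coe_sub, ← EReal.coe_sub, EReal.coe_eq_coe_iff] at hJ
  -- rewrite LHS integral over μ as an integral over ν
  set G : X → ℝ := fun x => (μ.rnDeriv ν x).toReal with hG
  have hG_meas : Measurable G := (Measure.measurable_rnDeriv μ ν).ennreal_toReal
  have hI_μ : ∫ x, -Real.exp (-((r x - Z) / β)) ∂μ = ∫ x, -(G x / w x) ∂ν := by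
    rw [← integral_rnDeriv_smul hμν]
    refine integral_congr_ae (ae_of_all _ fun x => ?_)
    show (μ.rnDeriv ν x).toReal • (-Real.exp (-((r x - Z) / β))) = -(G x / w x)
    rw [smul_eq_mul, h_exp_inv x, hG]
    ring
  -- integrability facts
  have hG_int : Integrable G ν := Measure.integrable_toReal_rnDeriv
  have hGw_int : Integrable (fun x => G x / w x) ν := by
    have : Integrable (fun x => (w x)⁻¹ * G x) ν := by
      refine hG_int.bdd_mul (c := c) (hw_meas.inv.aestronglyMeasurable) (ae_of_all _ fun x => ?_)
      rw [Real.norm_eq_abs, abs_of_pos (inv_pos.mpr (hw_pos x))]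
      exact hw_inv_le x
    refine this.congr (ae_of_all _ fun x => ?_)
    show (w x)⁻¹ * G x = G x / w x
    rw [div_eq_mul_inv, mul_comm]
  have h_logG_int : Integrable (fun x => Real.log (G x)) ν := by
    rw [hG]
    refine ((hint.congr h_logf).neg).congr (ae_of_all _ fun x => ?_)
    simp
  have h_logw : ∀ x, Real.log (w x) = (r x - Z) / β := by
    intro x; simp only [hw]; exact Real.log_exp _
  have h_logw_int : Integrable (fun x => Real.log (w x)) ν := by
    refine h_int_rZ.neg.congr (ae_of_all _ fun x => ?_)
    show -(-((r x - Z) / β)) = Real.log (w x)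
    rw [h_logw x]; ring
  -- the key nonnegative function
  set φ : X → ℝ := fun x => G x / w x - Real.log (G x / w x) - 1 with hφ
  have hG_pos : ∀ᵐ x ∂ν, 0 < G x := by
    filter_upwards [hg_pos, hg_lt_top] with x h1 h2
    exact ENNReal.toReal_pos h1.ne' h2.ne
  have hφ_eq : φ =ᵐ[ν] fun x => G x / w x - Real.log (G x) + Real.log (w x) - 1 := by
    filter_upwards [hG_pos] with x hx
    rw [hφ]
    simp only
    rw [Real.log_div hx.ne' (hw_pos x).ne']
    ring

  have hφ_nonneg : 0 ≤ᵐ[ν] φ := by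
    filter_upwards [hG_pos] with x hx
    have ht : 0 < G x / w x := div_pos hx (hw_pos x)
    have := Real.log_le_sub_one_of_pos ht
    rw [hφ]; simp only [Pi.zero_apply]; linarith
  -- the integral of φ is zero
  have hint2 : Integrable (fun x => G x / w x - Real.log (G x)) ν := hGw_int.sub h_logG_int
  have hint1 : Integrable (fun x => G x / w x - Real.log (G x) + Real.log (w x)) ν :=
    hint2.add h_logw_int
  have hφ_int : Integrable φ ν :=
    (hint1.sub (integrable_const 1)).congr hφ_eq.symm
  have hφ_zero : ∫ x, φ x ∂ν = 0 := by
    rw [integral_congr_ae hφ_eq, integral_sub hint1 (integrable_const 1),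
      integral_add hint2 h_logw_int, integral_sub hGw_int h_logG_int]
    have e1 : ∫ x, Real.log (ν.rnDeriv μ x).toReal ∂ν = -∫ x, Real.log (G x) ∂ν := by
      rw [integral_congr_ae h_logf, integral_neg]
    have e2 : ∫ x, -((r x - Z) / β) ∂ν = -∫ x, Real.log (w x) ∂ν := by
      rw [← integral_neg]
      refine integral_congr_ae (ae_of_all _ fun x => ?_)
      show -((r x - Z) / β) = -Real.log (w x)
      rw [h_logw x]
    rw [hI_μ, integral_neg, e1, e2] at hJ
    simp only [integral_const, measure_univ, probReal_univ, ENNReal.toReal_one, smul_eq_mul, one_mul]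
    linarith
  have hφ_ae : φ =ᵐ[ν] 0 := (integral_eq_zero_iff_of_nonneg_ae hφ_nonneg hφ_int).mp hφ_zero
  -- conclude G = w a.e.
  have hGw : ∀ᵐ x ∂ν, G x = w x := by
    filter_upwards [hφ_ae, hG_pos] with x hx0 hxpos
    have ht : 0 < G x / w x := div_pos hxpos (hw_pos x)
    by_contra hne
    have hne' : G x / w x ≠ 1 := by
      intro h
      exact hne ((div_eq_one_iff_eq (hw_pos x).ne').mp h)
    have := Real.log_lt_sub_one_of_pos ht hne'
    have h0 : φ x = 0 := hx0
    rw [hφ] at h0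
    simp only at h0
    linarith
  have hgw : μ.rnDeriv ν =ᵐ[ν] fun x => ENNReal.ofReal (w x) := by
    filter_upwards [hGw, hg_lt_top] with x hx hx'
    simp only [hG] at hx
    rw [← ENNReal.ofReal_toReal hx'.ne, hx]
  calc μ = ν.withDensity (μ.rnDeriv ν) := (Measure.withDensity_rnDeriv_eq μ ν hμν).symm
    _ = ν.withDensity (fun x => ENNReal.ofReal (w x)) := withDensity_congr_ae hgw
    _ = μStar := hμStar.symm
end

section
/- Let (X, 𝒳) be a measurable space, ν a probability measure on X, r : X → ℝ a bounded measurable reward, β > 0, Z := β·log ∫ exp(r(x)/β) dν(x), and μ* := ν.withDensity (fun x => exp((r(x) − Z)/β)). Then ∫ −exp(−(r(x) − Z)/β) dμ*(x) = −1 and D(ν‖μ*) = (Z − ∫ r dν)/β; consequently the optimal value of the DDRL objective equals J(μ*) = −1 + (∫ r dν − Z)/β. -/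
open MeasureTheory Real
open scoped Classical

/-- Value at the optimum: `∫ −exp(−(r−Z)/β) dμ* = −1`, `D(ν‖μ*) = (Z − ∫ r dν)/β`, and hence
the optimal DDRL objective value is `J(μ*) = −1 + (∫ r dν − Z)/β`. -/
theorem ddrl_optimal_value {X : Type*} [MeasurableSpace X]
    (ν : Measure X) [IsProbabilityMeasure ν]
    (r : X → ℝ) (hr : Measurable r) (C : ℝ) (hrBd : ∀ x, |r x| ≤ C)
    (β : ℝ) (hβ : 0 < β)
    (Z : ℝ) (hZ : Z = β * Real.log (∫ x, Real.exp (r x / β) ∂ν))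
    (μStar : Measure X)
    (hμStar : μStar = ν.withDensity (fun x => ENNReal.ofReal (Real.exp ((r x - Z) / β)))) :
    (∫ x, -Real.exp (-((r x - Z) / β)) ∂μStar) = -1
      ∧ klDiv ν μStar = (((Z - ∫ x, r x ∂ν) / β : ℝ) : EReal)
      ∧ ((∫ x, -Real.exp (-((r x - Z) / β)) ∂μStar : ℝ) : EReal) - klDiv ν μStar
          = ((-1 + ((∫ x, r x ∂ν) - Z) / β : ℝ) : EReal) := by
  subst hμStar
  set f : X → ENNReal := fun x => ENNReal.ofReal (Real.exp ((r x - Z) / β)) with hf_def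
  have hf_meas : Measurable f := (Real.measurable_exp.comp ((hr.sub measurable_const).div_const β)).ennreal_ofReal
  have hf_ne_zero : ∀ x, f x ≠ 0 := fun x => by
    simp [hf_def, ENNReal.ofReal_eq_zero, not_le, Real.exp_pos]
  have hf_ne_top : ∀ x, f x ≠ ⊤ := fun x => ENNReal.ofReal_ne_top
  -- Part 1
  have h1 : (∫ x, -Real.exp (-((r x - Z) / β)) ∂(ν.withDensity f)) = -1 := by
    have hg_meas : Measurable (fun x => Real.toNNReal (Real.exp ((r x - Z) / β))) :=
      (Real.measurable_exp.comp ((hr.sub measurable_const).div_const β)).real_toNNReal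
    rw [show (ν.withDensity f)
        = ν.withDensity (fun x => ((Real.toNNReal (Real.exp ((r x - Z) / β)) : NNReal) : ENNReal))
        from rfl,
      integral_withDensity_eq_integral_smul hg_meas]
    have : ∀ x, (Real.toNNReal (Real.exp ((r x - Z) / β))) • (-Real.exp (-((r x - Z) / β)))
        = -1 := by
      intro x
      rw [NNReal.smul_def, smul_eq_mul, Real.coe_toNNReal _ (Real.exp_nonneg _),
        mul_neg, ← Real.exp_add]
      simp
    simp only [this]
    simp
  -- rnDeriv computation
  have hac : ν ≪ ν.withDensity f :=
    withDensity_absolutelyContinuous' hf_meas.aemeasurable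
      (Filter.Eventually.of_forall hf_ne_zero)
  have hrn : ν.rnDeriv (ν.withDensity f) =ᵐ[ν] fun x => (f x)⁻¹ := by
    have h := Measure.rnDeriv_withDensity_right_of_absolutelyContinuous
      (μ := ν) (ν := ν) (f := f) Measure.AbsolutelyContinuous.rfl hf_meas.aemeasurable
      (Filter.Eventually.of_forall hf_ne_zero) (Filter.Eventually.of_forall hf_ne_top)
    filter_upwards [h, Measure.rnDeriv_self ν] with x hx hx2
    rw [hx, hx2, mul_one]
  have hlog : (fun x => Real.log (ν.rnDeriv (ν.withDensity f) x).toReal)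
      =ᵐ[ν] fun x => -((r x - Z) / β) := by
    filter_upwards [hrn] with x hx
    rw [hx, hf_def]
    simp only
    rw [← ENNReal.ofReal_inv_of_pos (Real.exp_pos _), ENNReal.toReal_ofReal (by positivity),
      ← Real.exp_neg, Real.log_exp]
  have hrInt : Integrable r ν :=
    Integrable.mono' (integrable_const C) hr.aestronglyMeasurable
      (Filter.Eventually.of_forall hrBd)
  have hInt2 : Integrable (fun x => -((r x - Z) / β)) ν :=
    (((hrInt.sub (integrable_const Z)).div_const β).neg)
  have hInt : Integrable (fun x => Real.log (ν.rnDeriv (ν.withDensity f) x).toReal) ν :=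
    hInt2.congr hlog.symm
  have h2 : klDiv ν (ν.withDensity f) = (((Z - ∫ x, r x ∂ν) / β : ℝ) : EReal) := by
    rw [klDiv, if_pos ⟨hac, hInt⟩]
    congr 1
    rw [integral_congr_ae hlog]
    rw [integral_neg, integral_div, integral_sub hrInt (integrable_const Z)]
    rw [integral_const]
    simp only [measure_univ, probReal_univ, ENNReal.toReal_one, one_smul, smul_eq_mul, one_mul]
    ring
  refine ⟨h1, h2, ?_⟩
  rw [h1, h2, ← EReal.coe_sub]
  congr 1
  ring
end

section
/- Let (X, 𝒳) be a measurable space, ν a probability measure on X, r : X → ℝ bounded measurable, and β > 0. Then for every probability measure μ on X with μ ≪ ν, ∫ r dμ − β·D(μ‖ν) ≤ β·log ∫ exp(r(x)/β) dν(x). -/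
open MeasureTheory Real
open scoped Classical

/-- Variational (Donsker–Varadhan type) upper bound for the reverse-KL-regularized RL
objective: for every probability measure `μ ≪ ν`,
`∫ r dμ − β·D(μ‖ν) ≤ β·log ∫ exp(r/β) dν`. -/
theorem reverse_kl_variational_bound {X : Type*} [MeasurableSpace X]
    (ν : Measure X) [IsProbabilityMeasure ν]
    (r : X → ℝ) (hr : Measurable r) (C : ℝ) (hrBd : ∀ x, |r x| ≤ C)
    (β : ℝ) (hβ : 0 < β)
    (μ : Measure X) [IsProbabilityMeasure μ] (hμν : μ ≪ ν) :
    ((∫ x, r x ∂μ : ℝ) : EReal) - (β : EReal) * klDiv μ ν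
      ≤ ((β * Real.log (∫ x, Real.exp (r x / β) ∂ν) : ℝ) : EReal) := by
  set ρ : X → ℝ := fun x => (μ.rnDeriv ν x).toReal with hρdef
  by_cases hint : Integrable (fun x => Real.log (ρ x)) μ
  case neg =>
    rw [klDiv, if_neg (by tauto), EReal.coe_mul_top_of_pos hβ, EReal.sub_top]
    exact bot_le
  rw [klDiv, if_pos ⟨hμν, hint⟩, ← EReal.coe_mul, ← EReal.coe_sub, EReal.coe_le_coe_iff]
  -- real-valued inequality
  have hρmeas : Measurable ρ := (Measure.measurable_rnDeriv μ ν).ennreal_toReal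
  have hrint : Integrable r μ :=
    (integrable_const C).mono' hr.aestronglyMeasurable (ae_of_all _ fun x => hrBd x)
  set g : X → ℝ := fun x => r x / β - Real.log (ρ x) with hgdef
  have hgint : Integrable g μ := (hrint.div_const β).sub hint
  set f : X → ℝ := fun x => Real.exp (r x / β) / ρ x with hfdef
  have hbound : ∀ x, Real.exp (r x / β) ≤ Real.exp (C / β) := fun x =>
    Real.exp_le_exp.mpr ((div_le_div_iff_of_pos_right hβ).mpr (abs_le.mp (hrBd x)).2)
  have hsmul_meas : Measurable (fun x => ρ x • f x) := (hρmeas.smul ((hr.div_const β).exp.div hρmeas))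
  have hsmul_int : Integrable (fun x => ρ x • f x) ν := by
    refine (integrable_const (Real.exp (C / β))).mono' hsmul_meas.aestronglyMeasurable
      (ae_of_all _ fun x => ?_)
    simp only [smul_eq_mul, Real.norm_eq_abs]
    rcases eq_or_ne (ρ x) 0 with h0 | h0
    · simp [hfdef, h0]
      positivity
    · have hρpos : 0 < ρ x := lt_of_le_of_ne ENNReal.toReal_nonneg (Ne.symm h0)
      rw [abs_of_nonneg (by positivity), mul_div_cancel₀ _ h0]
      exact hbound x
  have hfint : Integrable f μ := (integrable_rnDeriv_smul_iff hμν).mp hsmul_int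
  have hexpint : Integrable (fun x => Real.exp (r x / β)) ν :=
    (integrable_const (Real.exp (C / β))).mono' ((hr.div_const β).exp).aestronglyMeasurable
      (ae_of_all _ fun x => by rw [Real.norm_eq_abs, abs_of_pos (Real.exp_pos _)]; exact hbound x)
  set Z : ℝ := ∫ x, Real.exp (r x / β) ∂ν with hZdef
  have hfZ : ∫ x, f x ∂μ ≤ Z := by
    rw [← integral_rnDeriv_smul hμν]
    refine integral_mono hsmul_int hexpint fun x => ?_
    simp only [smul_eq_mul]
    rcases eq_or_ne (ρ x) 0 with h0 | h0
    · simp [hfdef, h0]; positivity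
    · rw [hfdef, mul_div_cancel₀ _ h0]
  -- a.e. positivity of the density
  have hρpos : ∀ᵐ x ∂μ, 0 < ρ x := by
    filter_upwards [Measure.rnDeriv_pos hμν, hμν.ae_le (Measure.rnDeriv_lt_top μ ν)] with x h1 h2
    exact ENNReal.toReal_pos h1.ne' h2.ne
  have hexpg : (fun x => Real.exp (g x)) =ᵐ[μ] f := by
    filter_upwards [hρpos] with x hx
    rw [hgdef, hfdef]
    simp only
    rw [Real.exp_sub, Real.exp_log hx]
  have hgexp_int : Integrable (fun x => Real.exp (g x)) μ := hfint.congr hexpg.symm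
  -- Jensen for exp
  have hjensen : Real.exp (∫ x, g x ∂μ) ≤ ∫ x, Real.exp (g x) ∂μ :=
    convexOn_exp.map_integral_le continuous_exp.continuousOn isClosed_univ
      (ae_of_all _ fun _ => Set.mem_univ _) hgint hgexp_int
  have hkey : ∫ x, g x ∂μ ≤ Real.log Z := by
    have h1 : Real.exp (∫ x, g x ∂μ) ≤ Z := by
      refine hjensen.trans ?_
      rw [integral_congr_ae hexpg]
      exact hfZ
    calc ∫ x, g x ∂μ = Real.log (Real.exp (∫ x, g x ∂μ)) := (Real.log_exp _).symm
      _ ≤ Real.log Z := Real.log_le_log (Real.exp_pos _) h1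
  have hgsplit : ∫ x, g x ∂μ = (∫ x, r x ∂μ) / β - ∫ x, Real.log (ρ x) ∂μ := by
    rw [hgdef, integral_sub (hrint.div_const β) hint, integral_div]
  have := mul_le_mul_of_nonneg_left hkey hβ.le
  rw [hgsplit, mul_sub, mul_div_cancel₀ _ hβ.ne'] at this
  linarith
end

section
/- Let (X, 𝒳) be a measurable space, ν a probability measure on X, r : X → ℝ bounded measurable, β > 0, and let μ be a probability measure on X with μ ≪ ν. Equality ∫ r dμ − β·D(μ‖ν) = β·log ∫ exp(r(x)/β) dν(x) holds if and only if dμ/dν = exp(r/β) / ∫ exp(r/β) dν holds ν-almost everywhere; i.e., the unique maximizer of the reverse-KL-regularized RL objective is the Gibbs tilting μ = ν.withDensity (exp(r/β) / ∫ exp(r/β) dν), so that the optimum satisfies μ(dx) ∝ ν(dx)·exp(r(x)/β). -/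
open MeasureTheory Real
open scoped Classical

lemma aux_mul_log_nonneg {t : ℝ} (ht : 0 ≤ t) : 0 ≤ t * Real.log t - (t - 1) := by
  rcases eq_or_lt_of_le ht with h | h
  · simp [← h]
  · have h1 := Real.add_one_le_exp (-Real.log t)
    rw [Real.exp_neg, Real.exp_log h] at h1
    have h2 : 0 < t⁻¹ := inv_pos.mpr h
    nlinarith [mul_le_mul_of_nonneg_left h1 ht, mul_inv_cancel₀ h.ne']

lemma aux_mul_log_eq_zero {t : ℝ} (ht : 0 ≤ t) (heq : t * Real.log t - (t - 1) = 0) :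
    t = 1 := by
  by_contra hne
  rcases eq_or_lt_of_le ht with h | h
  · simp [← h] at heq
  · have hlog : -Real.log t ≠ 0 := by
      simp only [ne_eq, neg_eq_zero, Real.log_eq_zero]
      push_neg
      exact ⟨h.ne', hne, by nlinarith⟩
    have h1 := Real.add_one_lt_exp hlog
    rw [Real.exp_neg, Real.exp_log h] at h1
    nlinarith [mul_lt_mul_of_pos_left h1 h, mul_inv_cancel₀ h.ne']

/-- Gibbs' inequality equality case: the KL integral vanishes iff the measures coincide. -/
lemma integral_llr_eq_zero_iff {X : Type*} [MeasurableSpace X] {μ P : Measure X}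
    [IsProbabilityMeasure μ] [IsProbabilityMeasure P] (hμP : μ ≪ P)
    (hint : Integrable (llr μ P) μ) :
    ∫ x, llr μ P x ∂μ = 0 ↔ μ = P := by
  constructor
  · intro h0
    set f : X → ℝ := fun x => (μ.rnDeriv P x).toReal with hf
    have h1 : ∫ x, f x * llr μ P x ∂P = ∫ x, llr μ P x ∂μ := by
      simpa [smul_eq_mul] using integral_rnDeriv_smul hμP (f := llr μ P)
    have hint' : Integrable (fun x => f x * llr μ P x) P := by
      simpa [smul_eq_mul] using (integrable_rnDeriv_smul_iff hμP).2 hint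
    have hf_int : Integrable f P := Measure.integrable_toReal_rnDeriv
    have hf_one : ∫ x, f x ∂P = 1 := by
      rw [Measure.integral_toReal_rnDeriv hμP]; simp
    set φ : X → ℝ := fun x => f x * llr μ P x - (f x - 1) with hφ
    have hφ_int : Integrable φ P := hint'.sub (hf_int.sub (integrable_const 1))
    have hφ_nonneg : 0 ≤ᵐ[P] φ :=
      Filter.Eventually.of_forall fun x =>
        aux_mul_log_nonneg (ENNReal.toReal_nonneg (a := μ.rnDeriv P x))
    have hφ_integral : ∫ x, φ x ∂P = 0 := by
      have e1 : ∫ x, φ x ∂P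
          = ∫ x, f x * llr μ P x ∂P - ∫ x, (f x - 1) ∂P :=
        integral_sub hint' (hf_int.sub (integrable_const 1))
      have e2 : ∫ x, (f x - 1) ∂P = ∫ x, f x ∂P - ∫ x, (1 : ℝ) ∂P :=
        integral_sub hf_int (integrable_const 1)
      rw [e1, e2, h1, h0, hf_one]
      simp
    have hφ_zero : φ =ᵐ[P] 0 :=
      (integral_eq_zero_iff_of_nonneg_ae hφ_nonneg hφ_int).mp hφ_integral
    have hf1 : μ.rnDeriv P =ᵐ[P] 1 := by
      filter_upwards [hφ_zero, Measure.rnDeriv_lt_top μ P] with x hx hlt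
      have : f x = 1 := aux_mul_log_eq_zero ENNReal.toReal_nonneg hx
      show μ.rnDeriv P x = 1
      exact (ENNReal.toReal_eq_one_iff _).mp this
    calc μ = P.withDensity (μ.rnDeriv P) := (Measure.withDensity_rnDeriv_eq μ P hμP).symm
      _ = P.withDensity 1 := withDensity_congr_ae hf1
      _ = P := by simp
  · intro h
    subst h
    have : llr μ μ =ᵐ[μ] 0 := by
      filter_upwards [Measure.rnDeriv_self μ] with x hx
      simp [llr, hx]
    rw [integral_congr_ae this]
    simp

/-- Equality case of the variational bound: `∫ r dμ − β·D(μ‖ν) = β·log ∫ exp(r/β) dν` holds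
iff `dμ/dν = exp(r/β) / ∫ exp(r/β) dν` holds `ν`-a.e., i.e. the unique maximizer of the
reverse-KL-regularized RL objective is the Gibbs tilting `μ(dx) ∝ ν(dx)·exp(r(x)/β)`. -/
theorem reverse_kl_equality_iff_gibbs {X : Type*} [MeasurableSpace X]
    (ν : Measure X) [IsProbabilityMeasure ν]
    (r : X → ℝ) (hr : Measurable r) (C : ℝ) (hrBd : ∀ x, |r x| ≤ C)
    (β : ℝ) (hβ : 0 < β)
    (μ : Measure X) [IsProbabilityMeasure μ] (hμν : μ ≪ ν) :
    ((∫ x, r x ∂μ : ℝ) : EReal) - (β : EReal) * klDiv μ ν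
        = ((β * Real.log (∫ x, Real.exp (r x / β) ∂ν) : ℝ) : EReal)
      ↔ μ.rnDeriv ν
          =ᵐ[ν] fun x => ENNReal.ofReal (Real.exp (r x / β) / ∫ y, Real.exp (r y / β) ∂ν) := by
  have hexp_bd : ∀ x, Real.exp (r x / β) ≤ Real.exp (C / β) := fun x =>
    Real.exp_le_exp.mpr ((div_le_div_iff_of_pos_right hβ).mpr ((abs_le.mp (hrBd x)).2))
  have hexp_meas : Measurable fun x => Real.exp (r x / β) := (hr.div_const β).exp
  have hexp_int : Integrable (fun x => Real.exp (r x / β)) ν := by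
    refine (integrable_const (Real.exp (C / β))).mono' hexp_meas.aestronglyMeasurable ?_
    exact Filter.Eventually.of_forall fun x => by
      rw [Real.norm_eq_abs, abs_of_pos (Real.exp_pos _)]; exact hexp_bd x
  set Z : ℝ := ∫ y, Real.exp (r y / β) ∂ν with hZ
  have hZpos : 0 < Z := integral_exp_pos hexp_int
  set P : Measure X := ν.tilted (fun x => r x / β) with hP
  haveI : IsProbabilityMeasure P := isProbabilityMeasure_tilted hexp_int
  have hμP : μ ≪ P := hμν.trans (absolutelyContinuous_tilted hexp_int)
  have hrμ_int : Integrable r μ := by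
    refine (integrable_const C).mono' hr.aestronglyMeasurable ?_
    exact Filter.Eventually.of_forall fun x => by rw [Real.norm_eq_abs]; exact hrBd x
  have hrβ_int : Integrable (fun x => r x / β) μ := hrμ_int.div_const β
  -- the target condition is equivalent to μ = P
  have htgt : (μ.rnDeriv ν
        =ᵐ[ν] fun x => ENNReal.ofReal (Real.exp (r x / β) / Z)) ↔ μ = P := by
    constructor
    · intro h
      rw [← Measure.withDensity_rnDeriv_eq μ ν hμν, withDensity_congr_ae h, hP, Measure.tilted]
    · intro h
      rw [h, hP, Measure.tilted]
      exact Measure.rnDeriv_withDensity ν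
        ((ENNReal.measurable_ofReal.comp (hexp_meas.div_const Z)))
  by_cases hInt : Integrable (llr μ ν) μ
  · -- finite KL case
    have hkl : klDiv μ ν = ((∫ x, llr μ ν x ∂μ : ℝ) : EReal) := by
      rw [klDiv, if_pos ⟨hμν, hInt⟩]; rfl
    rw [hkl]
    have hcoe : ((∫ x, r x ∂μ : ℝ) : EReal) - (β : EReal) * ((∫ x, llr μ ν x ∂μ : ℝ) : EReal)
        = ((∫ x, r x ∂μ - β * ∫ x, llr μ ν x ∂μ : ℝ) : EReal) := by
      rw [← EReal.coe_mul, ← EReal.coe_sub]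
    rw [hcoe, EReal.coe_eq_coe_iff]
    have hintP : Integrable (llr μ P) μ :=
      integrable_llr_tilted_right hμν hrβ_int hInt hexp_int
    have hIP : ∫ x, llr μ P x ∂μ
        = ∫ x, llr μ ν x ∂μ - ∫ x, r x / β ∂μ + Real.log Z :=
      integral_llr_tilted_right hμν hrβ_int hexp_int hInt
    have hdiv : ∫ x, r x / β ∂μ = (∫ x, r x ∂μ) / β := integral_div β r
    rw [htgt, ← integral_llr_eq_zero_iff hμP hintP, hIP, hdiv]
    constructor
    · intro h; field_simp at h ⊢; linarith
    · intro h; field_simp at h ⊢; linarith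
  · -- infinite KL case: both sides are false
    have hkl : klDiv μ ν = ⊤ := by
      rw [klDiv, if_neg]; intro ⟨_, h⟩; exact hInt h
    rw [hkl, EReal.coe_mul_top_of_pos hβ]
    rw [EReal.sub_top]
    constructor
    · intro h; exact absurd h (EReal.bot_ne_coe _)
    · intro h
      exfalso
      apply hInt
      have h' : llr μ ν =ᵐ[μ] fun x => r x / β - Real.log Z := by
        filter_upwards [hμν.ae_le h] with x hx
        rw [llr, hx, ENNReal.toReal_ofReal (by positivity),
          Real.log_div (Real.exp_pos _).ne' hZpos.ne', Real.log_exp]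
      exact (integrable_congr h'.symm).mp (hrβ_int.sub (integrable_const _))
end

section
/- Let I be a nonempty finite index set, v > 0, and m₁, m₂ : I → ℝ. Then D(⨂_{i∈I} gaussianReal (m₁ i) v ‖ ⨂_{i∈I} gaussianReal (m₂ i) v) = (Σ_{i∈I} (m₁ i − m₂ i)²) / (2v), where ⨂ denotes the finite product (Measure.pi) of the coordinate Gaussian measures. -/
open MeasureTheory Real
open scoped Classical NNReal

open ProbabilityTheory

section AuxPi

open scoped ENNReal

theorem klAux_lintegral_pi_prod_fin {n : ℕ} {E : Fin n → Type*}
    [∀ i, MeasurableSpace (E i)] (μ : ∀ i, Measure (E i)) [∀ i, SigmaFinite (μ i)]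
    (h : ∀ i, E i → ℝ≥0∞) (hm : ∀ i, Measurable (h i)) :
    ∫⁻ x, ∏ i, h i (x i) ∂Measure.pi μ = ∏ i, ∫⁻ y, h i y ∂μ i := by
  induction n with
  | zero => simp [Measure.pi_univ]
  | succ n ih =>
    have mp := (MeasureTheory.measurePreserving_piFinSuccAbove μ 0).symm
    have hF : Measurable fun x : ∀ i, E i => ∏ i, h i (x i) :=
      Finset.measurable_prod _ fun i _ => (hm i).comp (measurable_pi_apply i)
    rw [← mp.lintegral_comp hF]
    simp_rw [MeasurableEquiv.piFinSuccAbove_symm_apply, Fin.insertNthEquiv,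
      Fin.prod_univ_succ, Fin.insertNth_zero]
    simp only [Fin.zero_succAbove, cast_eq, Equiv.coe_fn_mk, Fin.cons_zero, Fin.cons_succ]
    have hg : Measurable fun y : ∀ j : Fin n, E j.succ => ∏ x, h x.succ (y x) :=
      Finset.measurable_prod _ fun i _ => (hm _).comp (measurable_pi_apply i)
    have key := lintegral_prod_mul (μ := μ 0) (ν := Measure.pi fun j => μ (Fin.succ j))
      (hm 0).aemeasurable hg.aemeasurable
    rw [ih _ _ fun i => hm _] at key
    exact key

theorem klAux_lintegral_pi_prod {ι : Type*} [Fintype ι] {E : ι → Type*}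
    [∀ i, MeasurableSpace (E i)] (μ : ∀ i, Measure (E i)) [∀ i, SigmaFinite (μ i)]
    (h : ∀ i, E i → ℝ≥0∞) (hm : ∀ i, Measurable (h i)) :
    ∫⁻ x, ∏ i, h i (x i) ∂Measure.pi μ = ∏ i, ∫⁻ y, h i y ∂μ i := by
  let e := (Fintype.equivFin ι).symm
  have hF : Measurable fun x : ∀ i, E i => ∏ i, h i (x i) :=
    Finset.measurable_prod _ fun i _ => (hm i).comp (measurable_pi_apply i)
  calc ∫⁻ x, ∏ i, h i (x i) ∂Measure.pi μ
      = ∫⁻ y, ∏ i, h i ((MeasurableEquiv.piCongrLeft E e) y i)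
          ∂Measure.pi (fun i' => μ (e i')) :=
        ((MeasureTheory.measurePreserving_piCongrLeft μ e).lintegral_comp hF).symm
    _ = ∫⁻ y, ∏ i', h (e i') (y i') ∂Measure.pi (fun i' => μ (e i')) := by
        congr 1 with y
        rw [← e.prod_comp fun i => h i ((MeasurableEquiv.piCongrLeft E e) y i)]
        exact Finset.prod_congr rfl fun i' _ => by
          rw [MeasurableEquiv.coe_piCongrLeft, Equiv.piCongrLeft_apply_apply]
    _ = ∏ i', ∫⁻ y, h (e i') y ∂μ (e i') :=
        klAux_lintegral_pi_prod_fin _ _ fun i' => hm (e i')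
    _ = ∏ i, ∫⁻ y, h i y ∂μ i := e.prod_comp fun i => ∫⁻ y, h i y ∂μ i

theorem klAux_pi_withDensity {ι : Type*} [Fintype ι] {E : ι → Type*}
    [∀ i, MeasurableSpace (E i)] (μ : ∀ i, Measure (E i)) [∀ i, SigmaFinite (μ i)]
    (g : ∀ i, E i → ℝ≥0∞) (hg : ∀ i, Measurable (g i))
    [∀ i, SigmaFinite ((μ i).withDensity (g i))] :
    Measure.pi (fun i => (μ i).withDensity (g i))
      = (Measure.pi μ).withDensity (fun x => ∏ i, g i (x i)) := by
  refine (Measure.pi_eq fun s hs => ?_)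
  rw [withDensity_apply _ (MeasurableSet.univ_pi hs),
    ← lintegral_indicator (MeasurableSet.univ_pi hs)]
  have key : ∀ x : ∀ i, E i, (Set.pi Set.univ s).indicator (fun x => ∏ i, g i (x i)) x
      = ∏ i, (s i).indicator (g i) (x i) := by
    intro x
    by_cases hx : x ∈ Set.pi Set.univ s
    · rw [Set.indicator_of_mem hx]
      exact Finset.prod_congr rfl fun i _ =>
        (Set.indicator_of_mem (hx i (Set.mem_univ i)) _).symm
    · rw [Set.indicator_of_notMem hx]
      rw [Set.mem_univ_pi] at hx
      push_neg at hx
      obtain ⟨i, hi⟩ := hx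
      exact (Finset.prod_eq_zero (Finset.mem_univ i)
        (Set.indicator_of_notMem hi _)).symm
  simp_rw [key]
  rw [klAux_lintegral_pi_prod μ _ fun i => (hg i).indicator (hs i)]
  exact Finset.prod_congr rfl fun i _ => by
    rw [lintegral_indicator (hs i), withDensity_apply _ (hs i)]

theorem klAux_pi_map_eval {ι : Type*} [Fintype ι] {E : ι → Type*}
    [∀ i, MeasurableSpace (E i)] (μ : ∀ i, Measure (E i))
    [∀ i, IsProbabilityMeasure (μ i)] (i : ι) :
    (Measure.pi μ).map (Function.eval i) = μ i := by
  ext s hs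
  rw [Measure.map_apply (measurable_pi_apply i) hs]
  have : Function.eval i ⁻¹' s = Set.pi Set.univ (Function.update (fun j => Set.univ) i s) := by
    ext x
    simp only [Set.mem_preimage, Set.mem_univ_pi]
    constructor
    · intro hx j
      rcases eq_or_ne j i with rfl | hj
      · simpa using hx
      · simp [Function.update_of_ne hj]
    · intro hx
      have := hx i
      simpa using this
  rw [this, Measure.pi_pi]
  rw [Finset.prod_eq_single i (fun j _ hj => by simp [Function.update_of_ne hj])
    (fun h => absurd (Finset.mem_univ i) h)]
  simp

end AuxPi

section AuxGauss

theorem klAux_integrable_id_gaussianReal (m : ℝ) {v : ℝ≥0} (hv : v ≠ 0) :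
    Integrable (fun x => x) (gaussianReal m v) := by
  rw [gaussianReal_of_var_ne_zero m hv]
  rw [integrable_withDensity_iff (measurable_gaussianPDF m v)
    (ae_of_all _ fun x => ENNReal.ofReal_lt_top)]
  have hvR : (0:ℝ) < (v:ℝ) := by positivity
  have hb : (0:ℝ) < (2 * (v:ℝ))⁻¹ := by positivity
  have h1 : Integrable (fun x : ℝ => (x + m) * Real.exp (-((2 * (v:ℝ))⁻¹) * x ^ 2)) := by
    simp_rw [add_mul]
    exact (integrable_mul_exp_neg_mul_sq hb).add
      ((integrable_exp_neg_mul_sq hb).const_mul m)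
  have h2 : Integrable (fun x : ℝ =>
      (x - m + m) * Real.exp (-((2 * (v:ℝ))⁻¹) * (x - m) ^ 2)) := h1.comp_sub_right m
  have h3 := h2.const_mul (Real.sqrt (2 * Real.pi * (v:ℝ)))⁻¹
  refine h3.congr (ae_of_all _ fun x => ?_)
  simp only [gaussianPDF, gaussianPDFReal]
  rw [ENNReal.toReal_ofReal (by positivity), sub_add_cancel]
  ring_nf

theorem klAux_integral_id_gaussianReal (m : ℝ) {v : ℝ≥0} (hv : v ≠ 0) :
    ∫ x, x ∂gaussianReal m v = m := by
  have hzero : ∫ x, x ∂gaussianReal 0 v = 0 := by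
    have hmap : (gaussianReal 0 v).map (fun x => (-1 : ℝ) * x) = gaussianReal 0 v := by
      have := gaussianReal_map_const_mul (μ := 0) (v := v) (-1)
      simpa using this
    have hint := klAux_integrable_id_gaussianReal 0 hv
    have : ∫ x, x ∂gaussianReal 0 v = ∫ x, (-1 : ℝ) * x ∂gaussianReal 0 v := by
      conv_lhs => rw [← hmap]
      rw [integral_map (f := fun x : ℝ => x) (by fun_prop) aestronglyMeasurable_id]
    rw [integral_const_mul] at this
    linarith
  have hmap := gaussianReal_map_add_const (μ := 0) (v := v) m
  rw [zero_add] at hmap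
  rw [← hmap, integral_map (f := fun x : ℝ => x) (by fun_prop) aestronglyMeasurable_id]
  have := klAux_integrable_id_gaussianReal 0 hv
  rw [integral_add this (integrable_const m), hzero, integral_const]
  simp

theorem klAux_gaussianReal_eq_withDensity_exp (m₁ m₂ : ℝ) {v : ℝ≥0} (hv : v ≠ 0) :
    gaussianReal m₁ v = (gaussianReal m₂ v).withDensity
      (fun y => ENNReal.ofReal (Real.exp ((m₁ - m₂) * (2 * y - m₁ - m₂) / (2 * v)))) := by
  rw [gaussianReal_of_var_ne_zero _ hv, gaussianReal_of_var_ne_zero _ hv,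
    ← withDensity_mul volume (measurable_gaussianPDF _ _)
      (by fun_prop)]
  congr 1
  funext y
  have hvR : (0:ℝ) < (v:ℝ) := by positivity
  simp only [Pi.mul_apply, gaussianPDF, gaussianPDFReal]
  rw [← ENNReal.ofReal_mul (by positivity)]
  congr 1
  have key : rexp (-(y - m₂) ^ 2 / (2 * (v:ℝ))) * rexp ((m₁ - m₂) * (2 * y - m₁ - m₂) / (2 * (v:ℝ)))
      = rexp (-(y - m₁) ^ 2 / (2 * (v:ℝ))) := by
    rw [← Real.exp_add]
    congr 1
    field_simp
    ring
  rw [mul_assoc ((Real.sqrt (2 * π * (v:ℝ)))⁻¹), key]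

end AuxGauss

/-- KL divergence between isotropic Gaussian product measures `N(m₁, vI)` and `N(m₂, vI)`:
`D(⨂ᵢ N(m₁ i, v) ‖ ⨂ᵢ N(m₂ i, v)) = (Σᵢ (m₁ i − m₂ i)²) / (2v)`. -/
theorem klDiv_gaussian_pi_same_variance {I : Type*} [Fintype I] [Nonempty I]
    (v : ℝ≥0) (hv : 0 < v) (m₁ m₂ : I → ℝ) :
    klDiv (Measure.pi fun i => gaussianReal (m₁ i) v)
        (Measure.pi fun i => gaussianReal (m₂ i) v)
      = (((∑ i, (m₁ i - m₂ i) ^ 2) / (2 * (v : ℝ)) : ℝ) : EReal) := by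
  have hv' : v ≠ 0 := hv.ne'
  have hvR : (0:ℝ) < (v:ℝ) := by positivity
  set L : I → ℝ → ℝ := fun i y => (m₁ i - m₂ i) * (2 * y - m₁ i - m₂ i) / (2 * (v:ℝ)) with hL
  set g : I → ℝ → ENNReal := fun i y => ENNReal.ofReal (Real.exp (L i y)) with hg
  have hgm : ∀ i, Measurable (g i) := fun i => by
    simp only [hg, hL]; fun_prop
  have h1 : ∀ i, gaussianReal (m₁ i) v = (gaussianReal (m₂ i) v).withDensity (g i) :=
    fun i => klAux_gaussianReal_eq_withDensity_exp (m₁ i) (m₂ i) hv'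
  set ν := Measure.pi fun i => gaussianReal (m₁ i) v with hν
  set μ := Measure.pi fun i => gaussianReal (m₂ i) v with hμ
  set f : (I → ℝ) → ENNReal := fun x => ∏ i, g i (x i) with hf
  have hfm : Measurable f :=
    Finset.measurable_prod _ fun i _ => (hgm i).comp (measurable_pi_apply i)
  have hsf : ∀ i, SigmaFinite ((gaussianReal (m₂ i) v).withDensity (g i)) := fun i => by
    rw [← h1 i]; infer_instance
  have hpi : ν = μ.withDensity f := by
    rw [hν]
    have : (fun i => gaussianReal (m₁ i) v)
        = fun i => (gaussianReal (m₂ i) v).withDensity (g i) := funext h1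
    rw [this, klAux_pi_withDensity _ _ hgm]
  have hac : ν ≪ μ := by rw [hpi]; exact withDensity_absolutelyContinuous μ f
  have hrn : ν.rnDeriv μ =ᵐ[μ] f := by
    rw [hpi]; exact Measure.rnDeriv_withDensity μ hfm
  have hrn' : ν.rnDeriv μ =ᵐ[ν] f := hrn.filter_mono hac.ae_le
  have hflog : ∀ x, Real.log (f x).toReal = ∑ i, L i (x i) := by
    intro x
    rw [hf]
    simp only [ENNReal.toReal_prod, ENNReal.toReal_ofReal (Real.exp_nonneg _), hg]
    rw [← Real.exp_sum, Real.log_exp]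
  have hae : (fun x => Real.log ((ν.rnDeriv μ x).toReal))
      =ᵐ[ν] fun x => ∑ i, L i (x i) := by
    filter_upwards [hrn'] with x hx
    rw [hx, hflog]
  -- integrability of each L i against the i-th coordinate Gaussian
  have hLrep : ∀ i, (fun y : ℝ => L i y) = fun y =>
      ((m₁ i - m₂ i) / (v:ℝ)) * y + (-((m₁ i - m₂ i) * (m₁ i + m₂ i)) / (2 * (v:ℝ))) := by
    intro i
    funext y
    rw [hL]
    field_simp
    ring
  have hLint : ∀ i, Integrable (L i) (gaussianReal (m₁ i) v) := by
    intro i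
    have h := ((klAux_integrable_id_gaussianReal (m₁ i) hv').const_mul
        ((m₁ i - m₂ i) / (v:ℝ))).add
      (integrable_const (-((m₁ i - m₂ i) * (m₁ i + m₂ i)) / (2 * (v:ℝ))))
    refine h.congr (ae_of_all _ fun y => ?_)
    exact (congrFun (hLrep i) y).symm
  have hLval : ∀ i, ∫ y, L i y ∂gaussianReal (m₁ i) v = (m₁ i - m₂ i) ^ 2 / (2 * (v:ℝ)) := by
    intro i
    rw [hLrep i, integral_add ((klAux_integrable_id_gaussianReal (m₁ i) hv').const_mul _)
      (integrable_const _), integral_const_mul, klAux_integral_id_gaussianReal (m₁ i) hv',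
      integral_const]
    simp only [measure_univ, probReal_univ, ENNReal.toReal_one, smul_eq_mul, one_mul]
    field_simp
    ring
  have hmap : ∀ i : I, ν.map (Function.eval i) = gaussianReal (m₁ i) v := fun i =>
    klAux_pi_map_eval _ i
  have hcoordint : ∀ i : I, Integrable (fun x : I → ℝ => L i (x i)) ν := by
    intro i
    have := (integrable_map_measure (hmap i ▸ (hLint i).aestronglyMeasurable)
      (measurable_pi_apply i).aemeasurable).mp (by rw [hmap i]; exact hLint i)
    exact this
  have hsumint : Integrable (fun x : I → ℝ => ∑ i, L i (x i)) ν :=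
    integrable_finset_sum _ fun i _ => hcoordint i
  have hint : Integrable (fun x => Real.log ((ν.rnDeriv μ x).toReal)) ν :=
    hsumint.congr hae.symm
  rw [klDiv, if_pos ⟨hac, hint⟩]
  have hval : ∫ x, Real.log ((ν.rnDeriv μ x).toReal) ∂ν
      = (∑ i, (m₁ i - m₂ i) ^ 2) / (2 * (v:ℝ)) := by
    rw [integral_congr_ae hae, integral_finset_sum _ fun i _ => hcoordint i]
    rw [Finset.sum_div]
    refine Finset.sum_congr rfl fun i _ => ?_
    rw [← hLval i, ← hmap i,
      integral_map (measurable_pi_apply i).aemeasurable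
        (hmap i ▸ (hLint i).aestronglyMeasurable)]
  rw [hval]
end

section
/- Let x₀ ∈ ℝ, T ∈ ℕ, and β : ℕ → ℝ with β(t) ∈ [0, 1] for all 1 ≤ t ≤ T. Define measures μ_t on ℝ recursively by μ_0 = Dirac x₀ and μ_t = pushforward of μ_{t−1} × (gaussianReal 0 1) under (x, ε) ↦ √(1−β(t))·x + √(β(t))·ε for 1 ≤ t ≤ T. Then for every 0 ≤ t ≤ T, μ_t = gaussianReal (√(ᾱ_t)·x₀) (1 − ᾱ_t), where ᾱ_t := ∏_{s=1}^{t} (1 − β(s)). -/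
open MeasureTheory ProbabilityTheory Real
open scoped NNReal ENNReal

lemma pdf_mul_pdf (m z : ℝ) {v w : ℝ≥0} (hv : v ≠ 0) (hw : w ≠ 0) (x : ℝ) :
    gaussianPDFReal m v x * gaussianPDFReal 0 w (z - x)
      = gaussianPDFReal m (v + w) z *
        gaussianPDFReal (((w : ℝ) * m + (v : ℝ) * z) / ((v : ℝ) + (w : ℝ)))
          (v * w / (v + w)) x := by
  have hv' : (0:ℝ) < v := by positivity
  have hw' : (0:ℝ) < w := by positivity
  have hvw : (0:ℝ) < (v:ℝ) + w := by positivity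
  have hu : ((v * w / (v + w) : ℝ≥0) : ℝ) = (v:ℝ) * w / ((v:ℝ) + w) := by
    push_cast; ring
  simp only [gaussianPDFReal, NNReal.coe_add, hu]
  rw [mul_mul_mul_comm, mul_mul_mul_comm ((√(2 * π * ((v:ℝ) + w)))⁻¹), ← Real.exp_add,
    ← Real.exp_add]
  congr 1
  · rw [← mul_inv, ← mul_inv, ← Real.sqrt_mul (by positivity), ← Real.sqrt_mul (by positivity)]
    congr 2
    field_simp
  · congr 1
    field_simp
    ring

lemma integral_pdf_conv (m z : ℝ) {v w : ℝ≥0} (hv : v ≠ 0) (hw : w ≠ 0) :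
    ∫ x, gaussianPDFReal m v x * gaussianPDFReal 0 w (z - x)
      = gaussianPDFReal m (v + w) z := by
  have hu : v * w / (v + w) ≠ 0 := by
    have : v + w ≠ 0 := by simp [hv]
    simp [div_eq_zero_iff, hv, hw, this]
  simp_rw [pdf_mul_pdf m z hv hw]
  rw [integral_const_mul, integral_gaussianPDFReal_eq_one _ hu, mul_one]

lemma integrable_pdf_conv (m z : ℝ) {v w : ℝ≥0} (hv : v ≠ 0) (hw : w ≠ 0) :
    Integrable (fun x => gaussianPDFReal m v x * gaussianPDFReal 0 w (z - x)) := by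
  simp_rw [pdf_mul_pdf m z hv hw]
  exact (integrable_gaussianPDFReal _ _).const_mul _

lemma lintegral_pdf_conv (m z : ℝ) {v w : ℝ≥0} (hv : v ≠ 0) (hw : w ≠ 0) :
    ∫⁻ x, gaussianPDF m v x * gaussianPDF 0 w (z - x) = gaussianPDF m (v + w) z := by
  simp only [gaussianPDF]
  have h1 : ∀ x : ℝ, ENNReal.ofReal (gaussianPDFReal m v x)
      * ENNReal.ofReal (gaussianPDFReal 0 w (z - x))
      = ENNReal.ofReal (gaussianPDFReal m v x * gaussianPDFReal 0 w (z - x)) := fun x =>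
    (ENNReal.ofReal_mul (gaussianPDFReal_nonneg _ _ _)).symm
  simp_rw [h1]
  rw [← ofReal_integral_eq_lintegral_ofReal (integrable_pdf_conv m z hv hw)
    (Filter.Eventually.of_forall fun x =>
      mul_nonneg (gaussianPDFReal_nonneg _ _ _) (gaussianPDFReal_nonneg _ _ _)),
    integral_pdf_conv m z hv hw]

lemma gauss_conv (m : ℝ) (v w : ℝ≥0) :
    Measure.map (fun p : ℝ × ℝ => p.1 + p.2) ((gaussianReal m v).prod (gaussianReal 0 w))
      = gaussianReal m (v + w) := by
  by_cases hv : v = 0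
  · subst hv
    rw [gaussianReal_zero_var, Measure.dirac_prod,
      Measure.map_map (by fun_prop) (by fun_prop)]
    have : (fun p : ℝ × ℝ => p.1 + p.2) ∘ (Prod.mk m) = (m + ·) := rfl
    rw [this, gaussianReal_map_const_add, zero_add, zero_add]
  by_cases hw : w = 0
  · subst hw
    rw [gaussianReal_zero_var, Measure.prod_dirac,
      Measure.map_map (by fun_prop) (by fun_prop)]
    have : (fun p : ℝ × ℝ => p.1 + p.2) ∘ (fun x => (x, (0:ℝ))) = (· + 0) := rfl
    rw [this, gaussianReal_map_add_const, add_zero, add_zero]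
  have hvw : v + w ≠ 0 := by simp [hv]
  rw [gaussianReal_of_var_ne_zero m hv, gaussianReal_of_var_ne_zero 0 hw,
    gaussianReal_of_var_ne_zero m hvw]
  ext s hs
  rw [Measure.map_apply (by fun_prop) hs, withDensity_apply _ hs]
  have hE : MeasurableSet ((fun p : ℝ × ℝ => p.1 + p.2) ⁻¹' s) :=
    (measurable_fst.add measurable_snd) hs
  rw [Measure.prod_apply hE]
  have hinner : ∀ x : ℝ, (volume.withDensity (gaussianPDF 0 w))
      (Prod.mk x ⁻¹' ((fun p : ℝ × ℝ => p.1 + p.2) ⁻¹' s))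
      = ∫⁻ z in s, gaussianPDF 0 w (z - x) := by
    intro x
    rw [withDensity_apply _ (measurable_prodMk_left hE)]
    have h1 : ∫⁻ y in Prod.mk x ⁻¹' ((fun p : ℝ × ℝ => p.1 + p.2) ⁻¹' s), gaussianPDF 0 w y
        = ∫⁻ y, (s.indicator fun z => gaussianPDF 0 w (z - x)) (y + x) := by
      rw [← lintegral_indicator (measurable_prodMk_left hE)]
      congr 1 with y
      by_cases hy : x + y ∈ s
      · simp [Set.indicator, hy, show y + x ∈ s from by rwa [add_comm],
          add_sub_cancel_right]
      · simp [Set.indicator, hy, show ¬ (y + x ∈ s) from by rwa [add_comm]]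
    rw [h1, lintegral_add_right_eq_self _ x, lintegral_indicator hs]
  simp_rw [hinner]
  have hm : Measurable (Function.uncurry fun (x z : ℝ) => gaussianPDF 0 w (z - x)) :=
    (measurable_gaussianPDF 0 w).comp (measurable_snd.sub measurable_fst)
  rw [lintegral_withDensity_eq_lintegral_mul _ (measurable_gaussianPDF _ _)
    hm.lintegral_prod_right]
  simp only [Pi.mul_apply]
  have h2 : ∀ x : ℝ, gaussianPDF m v x * ∫⁻ z in s, gaussianPDF 0 w (z - x)
      = ∫⁻ z in s, gaussianPDF m v x * gaussianPDF 0 w (z - x) := fun x =>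
    (lintegral_const_mul _ ((measurable_gaussianPDF 0 w).comp (measurable_id.sub_const x))).symm
  simp_rw [h2]
  rw [lintegral_lintegral_swap (((measurable_gaussianPDF m v).comp measurable_fst).mul
    ((measurable_gaussianPDF 0 w).comp (measurable_snd.sub measurable_fst))).aemeasurable]
  congr 1 with z
  exact lintegral_pdf_conv m z hv hw


/-- Closed-form marginal of the diffusion forward process started at `x₀`: if `μ_0 = δ_{x₀}`
and `μ_t` is obtained from `μ_{t−1}` by `(x, ε) ↦ √(1−β t)·x + √(β t)·ε` with independent
standard Gaussian noise `ε`, then `μ_t = N(√(ᾱ_t)·x₀, 1 − ᾱ_t)` for all `0 ≤ t ≤ T`, where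
`ᾱ_t = ∏_{s=1}^t (1 − β s)`. -/
theorem diffusion_forward_marginal (x₀ : ℝ) (T : ℕ) (β : ℕ → ℝ≥0)
    (hβ : ∀ t, 1 ≤ t → t ≤ T → β t ≤ 1)
    (μ : ℕ → Measure ℝ) (hμ0 : μ 0 = Measure.dirac x₀)
    (hμ : ∀ t, 1 ≤ t → t ≤ T →
      μ t = Measure.map
        (fun p : ℝ × ℝ => Real.sqrt (1 - (β t : ℝ)) * p.1 + Real.sqrt ((β t : ℝ)) * p.2)
        ((μ (t - 1)).prod (gaussianReal 0 1))) :
    ∀ t, t ≤ T →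
      μ t = gaussianReal (Real.sqrt ((∏ s ∈ Finset.Icc 1 t, (1 - β s) : ℝ≥0)) * x₀)
        (1 - ∏ s ∈ Finset.Icc 1 t, (1 - β s)) := by
  intro t
  induction t with
  | zero =>
    intro _
    simp [hμ0, gaussianReal_zero_var]
  | succ t ih =>
    intro hT
    have ht1 : t ≤ T := Nat.le_of_succ_le hT
    have hβ1 : β (t + 1) ≤ 1 := hβ (t + 1) (Nat.le_add_left 1 t) hT
    have hβ1' : (β (t + 1) : ℝ) ≤ 1 := by exact_mod_cast hβ1
    -- notation
    set P : ℝ≥0 := ∏ s ∈ Finset.Icc 1 t, (1 - β s) with hP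
    have hPle : P ≤ 1 := Finset.prod_le_one (fun _ _ => zero_le) (fun _ _ => tsub_le_self)
    have hPsucc : (∏ s ∈ Finset.Icc 1 (t + 1), (1 - β s) : ℝ≥0) = P * (1 - β (t + 1)) := by
      rw [hP, ← Finset.prod_Icc_succ_top (Nat.le_add_left 1 t)]
    have ha : Real.sqrt (1 - (β (t+1) : ℝ)) = Real.sqrt ((1 - β (t+1) : ℝ≥0) : ℝ) := by
      rw [NNReal.coe_sub hβ1, NNReal.coe_one]
    rw [hμ (t + 1) (Nat.le_add_left 1 t) hT, Nat.add_sub_cancel, ih ht1]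
    -- decompose the map
    have hmap : (fun p : ℝ × ℝ => Real.sqrt (1 - (β (t+1) : ℝ)) * p.1
          + Real.sqrt ((β (t+1) : ℝ)) * p.2)
        = (fun p : ℝ × ℝ => p.1 + p.2) ∘
          (Prod.map (fun x => Real.sqrt (1 - (β (t+1) : ℝ)) * x)
            (fun x => Real.sqrt ((β (t+1) : ℝ)) * x)) := rfl
    rw [hmap, ← Measure.map_map (by fun_prop) (by fun_prop),
      ← Measure.map_prod_map _ _ (by fun_prop) (by fun_prop),
      gaussianReal_map_const_mul, gaussianReal_map_const_mul, mul_zero, gauss_conv]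
    congr 1
    · -- means
      rw [ha, hPsucc, NNReal.coe_mul, Real.sqrt_mul (NNReal.coe_nonneg P)]
      ring
    · -- variances
      have hsq1 : ((1 - β (t + 1) : ℝ≥0))
          = NNReal.mk (Real.sqrt (1 - (β (t+1) : ℝ)) ^ 2) (sq_nonneg _) := by
        apply NNReal.coe_injective
        simp only [NNReal.coe_mk, NNReal.coe_sub hβ1, NNReal.coe_one]
        rw [Real.sq_sqrt (by linarith)]
      have hsq2 : (β (t + 1)) = (NNReal.mk (Real.sqrt ((β (t+1) : ℝ)) ^ 2) (sq_nonneg _) : ℝ≥0) := by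
        apply NNReal.coe_injective
        simp only [NNReal.coe_mk]
        rw [Real.sq_sqrt (NNReal.coe_nonneg _)]
      rw [← hsq1, ← hsq2, hPsucc, mul_one]
      have hP2 : P * (1 - β (t + 1)) ≤ 1 :=
        le_trans (mul_le_mul' hPle le_rfl) (by simp)
      ext
      rw [NNReal.coe_add, NNReal.coe_mul, NNReal.coe_sub hP2, NNReal.coe_sub hPle,
        NNReal.coe_sub hβ1, NNReal.coe_mul, NNReal.coe_sub hβ1, NNReal.coe_one]
      ring
end
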